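/- For the system H₁ = p_x p_y + γ₁xy + γ₂/√(xy³) + γ₃/y², the quartic function K₄ = -4(xp_x - yp_y)²(p_x² + γ₁y²) - 4γ₂²/(xy) + 8p_x(xp_x - yp_y)γ₂/√(xy) + 16x(p_x² + γ₁y²)γ₃/y satisfies {H₁, K₄} = 0 on the domain x > 0, y > 0. -/

import Mathlib

noncomputable def pb (F G : ℝ → ℝ → ℝ → ℝ → ℝ) (x y px py : ℝ) : ℝ :=
  deriv (fun t => F x y t py) px * deriv (fun t => G t y px py) x
  - deriv (fun t => F t y px py) x * deriv (fun t => G x y t py) px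
  + deriv (fun t => F x y px t) py * deriv (fun t => G x t px py) y
  - deriv (fun t => F x t px py) y * deriv (fun t => G x y px t) py

noncomputable def H₁new (γ₁ γ₂ γ₃ : ℝ) : ℝ → ℝ → ℝ → ℝ → ℝ :=
  fun x y px py => px*py + γ₁*x*y + γ₂ / Real.sqrt (x*y^3) + γ₃ / y^2

noncomputable def K₄new (γ₁ γ₂ γ₃ : ℝ) : ℝ → ℝ → ℝ → ℝ → ℝ :=
  fun x y px py =>
    -4*(x*px - y*py)^2*(px^2 + γ₁*y^2) - 4*γ₂^2/(x*y)
    + 8*px*(x*px - y*py)*γ₂ / Real.sqrt (x*y)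
    + 16*x*(px^2 + γ₁*y^2)*γ₃ / y

/-! The bracket is the usual combination of the eight first partial derivatives of H₁ and K₄,
each computed by the `HasDerivAt` calculus. On `x, y > 0` the only irrational terms are `√(xy)`
and `√(xy³)`; writing `x = u²`, `y = v²` turns them into `uv` and `uv³`, after which
`{H₁, K₄} = 0` is an identity of rational functions. -/

theorem pb_eq_of_hasDerivAt {F G : ℝ → ℝ → ℝ → ℝ → ℝ}
    {x y px py Fx Fy Fpx Fpy Gx Gy Gpx Gpy : ℝ}
    (hFx : HasDerivAt (fun t => F t y px py) Fx x)
    (hFy : HasDerivAt (fun t => F x t px py) Fy y)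
    (hFpx : HasDerivAt (fun t => F x y t py) Fpx px)
    (hFpy : HasDerivAt (fun t => F x y px t) Fpy py)
    (hGx : HasDerivAt (fun t => G t y px py) Gx x)
    (hGy : HasDerivAt (fun t => G x t px py) Gy y)
    (hGpx : HasDerivAt (fun t => G x y t py) Gpx px)
    (hGpy : HasDerivAt (fun t => G x y px t) Gpy py) :
    pb F G x y px py = Fpx * Gx - Fx * Gpx + Fpy * Gy - Fy * Gpy := by
  rw [pb, hFx.deriv, hFy.deriv, hFpx.deriv, hFpy.deriv, hGx.deriv, hGy.deriv, hGpx.deriv,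
    hGpy.deriv]

theorem HasDerivAt.div_sqrt {f g : ℝ → ℝ} {f' g' t : ℝ} (hg : HasDerivAt g g' t)
    (hf : HasDerivAt f f' t) (ht : 0 < f t) :
    HasDerivAt (fun s => g s / √(f s)) ((g' - g t * f' / (2 * f t)) / √(f t)) t := by
  have hs : 0 < √(f t) := Real.sqrt_pos.2 ht
  refine (hg.fun_div (hf.sqrt ht.ne') hs.ne').congr_deriv ?_
  field_simp
  rw [Real.sq_sqrt ht.le]
  ring

section PartialDerivatives

variable (γ₁ γ₂ γ₃ : ℝ) {x y px py : ℝ}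

theorem hasDerivAt_H₁new_px : HasDerivAt (fun t => H₁new γ₁ γ₂ γ₃ x y t py) py px :=
  (((hasDerivAt_mul_const py).add_const (γ₁*x*y)).add_const (γ₂ / √(x*y^3))).add_const
    (γ₃ / y^2)

theorem hasDerivAt_H₁new_py : HasDerivAt (fun t => H₁new γ₁ γ₂ γ₃ x y px t) px py :=
  ((((hasDerivAt_id' py).const_mul px).add_const (γ₁*x*y)).add_const (γ₂ / √(x*y^3))).add_const
    (γ₃ / y^2) |>.congr_deriv (mul_one px)

theorem hasDerivAt_H₁new_x (hx : 0 < x) (hy : 0 < y) :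
    HasDerivAt (fun t => H₁new γ₁ γ₂ γ₃ t y px py) (γ₁*y - γ₂ / (2*x*√(x*y^3))) x := by
  refine ((((hasDerivAt_id' x).const_mul γ₁).mul_const y).const_add (px*py)).fun_add
    ((hasDerivAt_const x γ₂).div_sqrt ((hasDerivAt_id' x).mul_const (y^3)) (by positivity))
    |>.add_const (γ₃ / y^2) |>.congr_deriv ?_
  field_simp
  ring

theorem hasDerivAt_H₁new_y (hx : 0 < x) (hy : 0 < y) :
    HasDerivAt (fun t => H₁new γ₁ γ₂ γ₃ x t px py)
      (γ₁*x - 3*γ₂ / (2*y*√(x*y^3)) - 2*γ₃ / y^3) y := by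
  refine ((((hasDerivAt_id' y).const_mul (γ₁*x)).const_add (px*py)).fun_add
    ((hasDerivAt_const y γ₂).div_sqrt ((hasDerivAt_pow 3 y).const_mul x) (by positivity)))
    |>.fun_add ((hasDerivAt_const y γ₃).fun_div (hasDerivAt_pow 2 y) (by positivity))
    |>.congr_deriv ?_
  field_simp
  ring

theorem hasDerivAt_K₄new_px : HasDerivAt (fun t => K₄new γ₁ γ₂ γ₃ x y t py)
    (-8*x*(x*px - y*py)*(px^2 + γ₁*y^2) - 8*px*(x*px - y*py)^2
      + 8*γ₂*(2*x*px - y*py) / √(x*y) + 32*x*px*γ₃ / y) px := by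
  have hL : HasDerivAt (fun t => x*t - y*py) x px := by
    simpa using ((hasDerivAt_id' px).const_mul x).sub_const (y*py)
  have hP : HasDerivAt (fun t => t^2 + γ₁*y^2) (2*px) px := by
    simpa using (hasDerivAt_pow 2 px).add_const (γ₁*y^2)
  refine ((((hL.fun_pow 2).const_mul (-4)).fun_mul hP).sub_const (4*γ₂^2/(x*y))).fun_add
    ((((hasDerivAt_id' px).const_mul 8).fun_mul hL).mul_const γ₂ |>.div_const √(x*y))
    |>.fun_add ((hP.const_mul (16*x)).mul_const γ₃ |>.div_const y) |>.congr_deriv ?_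
  ring

theorem hasDerivAt_K₄new_py : HasDerivAt (fun t => K₄new γ₁ γ₂ γ₃ x y px t)
    (8*y*(x*px - y*py)*(px^2 + γ₁*y^2) - 8*y*px*γ₂ / √(x*y)) py := by
  have hL : HasDerivAt (fun t => x*px - y*t) (-y) py := by
    simpa using ((hasDerivAt_id' py).const_mul y).const_sub (x*px)
  refine ((((hL.fun_pow 2).const_mul (-4)).mul_const (px^2 + γ₁*y^2)).sub_const
    (4*γ₂^2/(x*y))).fun_add ((hL.const_mul (8*px)).mul_const γ₂ |>.div_const √(x*y))
    |>.add_const (16*x*(px^2 + γ₁*y^2)*γ₃ / y) |>.congr_deriv ?_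
  ring

theorem hasDerivAt_K₄new_x (hx : 0 < x) (hy : 0 < y) :
    HasDerivAt (fun t => K₄new γ₁ γ₂ γ₃ t y px py)
    (-8*px*(x*px - y*py)*(px^2 + γ₁*y^2) + 4*γ₂^2 / (x^2*y)
      + 4*px*γ₂*(x*px + y*py) / (x*√(x*y)) + 16*γ₃*(px^2 + γ₁*y^2) / y) x := by
  have hL : HasDerivAt (fun t => t*px - y*py) px x := by
    simpa using ((hasDerivAt_id' x).mul_const px).sub_const (y*py)
  have hxy : HasDerivAt (fun t => t*y) y x := by simpa using (hasDerivAt_id' x).mul_const y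
  refine ((((hL.fun_pow 2).const_mul (-4)).mul_const (px^2 + γ₁*y^2)).fun_sub
    ((hasDerivAt_const x (4*γ₂^2)).fun_div hxy (by positivity))).fun_add
    (((hL.const_mul (8*px)).mul_const γ₂).div_sqrt hxy (by positivity))
    |>.fun_add ((((hasDerivAt_id' x).const_mul 16).mul_const (px^2 + γ₁*y^2)).mul_const γ₃
      |>.div_const y) |>.congr_deriv ?_
  field_simp
  ring

theorem hasDerivAt_K₄new_y (hx : 0 < x) (hy : 0 < y) :
    HasDerivAt (fun t => K₄new γ₁ γ₂ γ₃ x t px py)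
    (8*py*(x*px - y*py)*(px^2 + γ₁*y^2) - 8*γ₁*y*(x*px - y*py)^2 + 4*γ₂^2 / (x*y^2)
      - 4*px*γ₂*(x*px + y*py) / (y*√(x*y)) + 16*x*γ₃*(γ₁ - px^2/y^2)) y := by
  have hL : HasDerivAt (fun t => x*px - t*py) (-py) y := by
    simpa using ((hasDerivAt_id' y).mul_const py).const_sub (x*px)
  have hP : HasDerivAt (fun t => px^2 + γ₁*t^2) (2*γ₁*y) y :=
    (((hasDerivAt_pow 2 y).const_mul γ₁).const_add (px^2)).congr_deriv (by simp; ring)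
  have hxy : HasDerivAt (fun t => x*t) x y := by simpa using (hasDerivAt_id' y).const_mul x
  refine ((((hL.fun_pow 2).const_mul (-4)).fun_mul hP).fun_sub
    ((hasDerivAt_const y (4*γ₂^2)).fun_div hxy (by positivity))).fun_add
    (((hL.const_mul (8*px)).mul_const γ₂).div_sqrt hxy (by positivity))
    |>.fun_add (((hP.const_mul (16*x)).mul_const γ₃).fun_div (hasDerivAt_id' y) hy.ne')
    |>.congr_deriv ?_
  field_simp
  ring

end PartialDerivatives

theorem stmt10 (γ₁ γ₂ γ₃ : ℝ) (x y px py : ℝ) (hx : 0 < x) (hy : 0 < y) :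
    pb (H₁new γ₁ γ₂ γ₃) (K₄new γ₁ γ₂ γ₃) x y px py = 0 := by
  rw [pb_eq_of_hasDerivAt
    (hasDerivAt_H₁new_x γ₁ γ₂ γ₃ hx hy) (hasDerivAt_H₁new_y γ₁ γ₂ γ₃ hx hy)
    (hasDerivAt_H₁new_px γ₁ γ₂ γ₃) (hasDerivAt_H₁new_py γ₁ γ₂ γ₃)
    (hasDerivAt_K₄new_x γ₁ γ₂ γ₃ hx hy) (hasDerivAt_K₄new_y γ₁ γ₂ γ₃ hx hy)
    (hasDerivAt_K₄new_px γ₁ γ₂ γ₃) (hasDerivAt_K₄new_py γ₁ γ₂ γ₃)]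
  obtain ⟨u, hu, rfl⟩ : ∃ u, 0 < u ∧ u^2 = x :=
    ⟨√x, Real.sqrt_pos.2 hx, Real.sq_sqrt hx.le⟩
  obtain ⟨v, hv, rfl⟩ : ∃ v, 0 < v ∧ v^2 = y :=
    ⟨√y, Real.sqrt_pos.2 hy, Real.sq_sqrt hy.le⟩
  have h1 : √(u^2 * v^2) = u * v := by rw [← mul_pow, Real.sqrt_sq (by positivity)]
  have h3 : √(u^2 * (v^2)^3) = u * v^3 := by
    rw [show u^2 * (v^2)^3 = (u * v^3)^2 by ring, Real.sqrt_sq (by positivity)]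
  rw [h1, h3]
  field_simp
  ring
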